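/- If T is a tree that is not a path graph, then the metric dimension of T equals |L(T)| - |K(T)|, where L(T) is the set of leaves of T and K(T) is the set of exterior major nodes of T. -/

import Mathlib

open SimpleGraph


/-- `R` is a resolving set of `G`: every pair of distinct vertices is distinguished by the
graph distance to some vertex of `R`. -/
def IsResolvingSet {V : Type*} (G : SimpleGraph V) (R : Set V) : Prop :=
  ∀ u v : V, u ≠ v → ∃ w ∈ R, G.dist u w ≠ G.dist v w

/-- The metric dimension of `G`: the minimal cardinality of a resolving set. -/
noncomputable def metricDim {V : Type*} [Fintype V] (G : SimpleGraph V) : ℕ :=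
  sInf {n : ℕ | ∃ R : Set V, IsResolvingSet G R ∧ R.ncard = n}

/-- A leaf: a vertex of degree 1. -/
def IsLeafVx {V : Type*} [Fintype V] (G : SimpleGraph V) [DecidableRel G.Adj] (v : V) : Prop :=
  G.degree v = 1

/-- An exterior major node: a vertex of degree at least 3 having a path to a leaf all of whose
internal vertices have degree 2. -/
def IsExtMajor {V : Type*} [Fintype V] (G : SimpleGraph V) [DecidableRel G.Adj] (v : V) : Prop :=
  3 ≤ G.degree v ∧ ∃ (l : V) (p : G.Walk v l), IsLeafVx G l ∧ p.IsPath ∧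
    ∀ u ∈ p.support, u ≠ v → u ≠ l → G.degree u = 2

/-- A path graph: a tree all of whose vertices have degree at most 2. -/
def IsPathGraph {V : Type*} [Fintype V] (G : SimpleGraph V) [DecidableRel G.Adj] : Prop :=
  G.IsTree ∧ ∀ v : V, G.degree v ≤ 2

/-!
In a tree, `branch k a` is the set of vertices on `a`'s side of the edge `ka`, and every path
leaving a branch passes through its root `k`. A nonempty set `W` resolves a tree as soon as at
every vertex at most one branch misses `W`: if `u ≠ v` were unresolved, the steps from `u` and
from `v` towards each other would again be unresolved and closer to `W`, until they meet at a
vertex with two branches missing `W`. Conversely the two neighbours `a, b` of a vertex `c` are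
resolved only from inside `branch c a ∪ branch c b`.

Every leaf `l` has a leg, the branch at its nearest major vertex containing `l`; legs of distinct
leaves are disjoint, and the nearest major vertices of leaves are exactly the exterior major
vertices. Hence a resolving set meets all legs but at most one per exterior major vertex, and
dropping one leaf per exterior major vertex from the set of leaves gives a resolving set, since
any two branches at a vertex contain two leaves with the same nearest major vertex.
-/

namespace SimpleGraph

variable {V : Type*} {G : SimpleGraph V}

section Degree

variable {v : V} [Fintype (G.neighborSet v)]

lemma two_le_degree_of_adj {a b : V} (ha : G.Adj v a) (hb : G.Adj v b) (hab : a ≠ b) :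
    2 ≤ G.degree v := by
  classical
  rw [← card_neighborFinset_eq_degree]
  exact Finset.one_lt_card.mpr ⟨a, by simpa, b, by simpa, hab⟩

lemma three_le_degree_of_adj {a b c : V} (ha : G.Adj v a) (hb : G.Adj v b) (hc : G.Adj v c)
    (hab : a ≠ b) (hac : a ≠ c) (hbc : b ≠ c) : 3 ≤ G.degree v := by
  classical
  rw [← card_neighborFinset_eq_degree]
  exact Finset.two_lt_card.mpr ⟨a, by simpa, b, by simpa, c, by simpa, hab, hac, hbc⟩

lemma exists_adj_adj_ne_of_three_le_degree (h : 3 ≤ G.degree v) (x : V) :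
    ∃ a b, G.Adj v a ∧ G.Adj v b ∧ a ≠ b ∧ a ≠ x ∧ b ≠ x := by
  classical
  rw [← card_neighborFinset_eq_degree] at h
  obtain ⟨a, ha, b, hb, c, hc, hab, hac, hbc⟩ := Finset.two_lt_card.mp h
  rw [mem_neighborFinset] at ha hb hc
  by_cases hax : a = x
  · exact ⟨b, c, hb, hc, hbc, hax ▸ hab.symm, hax ▸ hac.symm⟩
  by_cases hbx : b = x
  · exact ⟨a, c, ha, hc, hac, hax, hbx ▸ hbc.symm⟩
  · exact ⟨a, b, ha, hb, hab, hax, hbx⟩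

end Degree

lemma Connected.exists_adj_dist_add_one (hG : G.Connected) {u v : V} (h : u ≠ v) :
    ∃ w, G.Adj u w ∧ G.dist v w + 1 = G.dist v u := by
  obtain ⟨p, hp⟩ := hG.exists_walk_length_eq_dist u v
  cases p with
  | nil => exact absurd rfl h
  | @cons _ w _ hadj q =>
    refine ⟨w, hadj, le_antisymm ?_ ?_⟩
    · rw [dist_comm, dist_comm (u := v), ← hp, Walk.length_cons]
      exact Nat.add_le_add_right (dist_le q) 1
    · have := hG.dist_triangle (u := v) (v := w) (w := u)
      rwa [dist_eq_one_iff_adj.mpr hadj.symm] at this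

open Classical in
/-- A neighbour of `u` on a shortest walk from `u` to `v`; junk value `u` when `u = v`. -/
noncomputable def towards (G : SimpleGraph V) (u v : V) : V :=
  if h : ∃ w, G.Adj u w ∧ G.dist v w + 1 = G.dist v u then h.choose else u

section Connected

variable (hG : G.Connected)
include hG

lemma Connected.adj_towards {u v : V} (h : u ≠ v) : G.Adj u (G.towards u v) := by
  have h' := hG.exists_adj_dist_add_one h
  rw [towards, dif_pos h']
  exact h'.choose_spec.1

lemma Connected.dist_towards_add_one {u v : V} (h : u ≠ v) :
    G.dist v (G.towards u v) + 1 = G.dist v u := by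
  have h' := hG.exists_adj_dist_add_one h
  rw [towards, dif_pos h']
  exact h'.choose_spec.2

lemma Connected.towards_ne_towards {x y z : V} (hyx : y ≠ x) (hyz : y ≠ z)
    (h : G.dist x y + G.dist y z = G.dist x z) : G.towards y x ≠ G.towards y z := by
  intro heq
  have h₁ := hG.dist_towards_add_one hyx
  have h₂ := hG.dist_towards_add_one hyz
  have := hG.dist_triangle (u := x) (v := G.towards y x) (w := z)
  rw [heq, dist_comm (u := G.towards y z)] at this
  rw [heq] at h₁
  rw [dist_comm (u := y) (v := z)] at h
  omega

lemma Connected.exists_fork [Finite V] (r x₁ x₂ : V) :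
    ∃ y, G.dist r y + G.dist y x₁ = G.dist r x₁ ∧
      G.dist r y + G.dist y x₂ = G.dist r x₂ ∧
      (y = x₁ ∨ y = x₂ ∨ G.towards y x₁ ≠ G.towards y x₂) := by
  set S := {y | G.dist r y + G.dist y x₁ = G.dist r x₁ ∧
    G.dist r y + G.dist y x₂ = G.dist r x₂}
  obtain ⟨y, ⟨hy₁, hy₂⟩, hmax⟩ :=
    S.exists_max_image (G.dist r) S.toFinite ⟨r, by simp [S]⟩
  refine ⟨y, hy₁, hy₂, ?_⟩
  by_contra! ⟨hyx₁, hyx₂, heq⟩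
  -- otherwise the common next vertex `t` of both geodesics would be a farther point of `S`
  set t := G.towards y x₁
  have ht₁ : G.dist x₁ t + 1 = G.dist x₁ y := hG.dist_towards_add_one hyx₁
  have ht₂ : G.dist x₂ t + 1 = G.dist x₂ y := heq ▸ hG.dist_towards_add_one hyx₂
  have hyt : G.dist y t = 1 := dist_eq_one_iff_adj.mpr (hG.adj_towards hyx₁)
  have hrt := hG.dist_triangle (u := r) (v := y) (w := t)
  have h₁ := hG.dist_triangle (u := r) (v := t) (w := x₁)
  have h₂ := hG.dist_triangle (u := r) (v := t) (w := x₂)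
  rw [dist_comm (u := y) (v := x₁)] at hy₁
  rw [dist_comm (u := y) (v := x₂)] at hy₂
  rw [dist_comm (u := t) (v := x₁)] at h₁
  rw [dist_comm (u := t) (v := x₂)] at h₂
  have := hmax t ⟨by rw [dist_comm (u := t)]; omega, by rw [dist_comm (u := t)]; omega⟩
  omega

lemma Connected.dist_add_dist_of_mem_support {u v w : V} {p : G.Walk u v}
    (hp : p.length = G.dist u v) (hw : w ∈ p.support) :
    G.dist u w + G.dist w v = G.dist u v := by
  classical
  have h := congrArg Walk.length (p.take_spec hw)
  rw [Walk.length_append, hp] at h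
  have := dist_le (p.takeUntil w hw)
  have := dist_le (p.dropUntil w hw)
  have := hG.dist_triangle (u := u) (v := w) (w := v)
  omega

lemma Connected.two_le_degree_of_dist_add_dist {x y z : V} [Fintype (G.neighborSet y)]
    (hyx : y ≠ x) (hyz : y ≠ z) (h : G.dist x y + G.dist y z = G.dist x z) : 2 ≤ G.degree y :=
  two_le_degree_of_adj (hG.adj_towards hyx) (hG.adj_towards hyz) (hG.towards_ne_towards hyx hyz h)

end Connected

/-- The branch at `k` through its neighbour `a`: the vertices on `a`'s side of the edge `ka`. -/
def branch (G : SimpleGraph V) (k a : V) : Set V := {y | G.dist y k = G.dist y a + 1}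

lemma mem_branch {k a y : V} : y ∈ G.branch k a ↔ G.dist y k = G.dist y a + 1 := Iff.rfl

lemma mem_branch_of_adj {k a : V} (h : G.Adj k a) : a ∈ G.branch k a := by
  simp [mem_branch, dist_comm, dist_eq_one_iff_adj.mpr h]

lemma ne_of_mem_branch {k a y : V} (hy : y ∈ G.branch k a) : y ≠ k := by
  rintro rfl
  simp [mem_branch] at hy

lemma Connected.mem_branch_towards (hG : G.Connected) {k y : V} (h : y ≠ k) :
    y ∈ G.branch k (G.towards k y) :=
  (hG.dist_towards_add_one h.symm).symm

section Tree

variable (hT : G.IsTree)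
include hT

lemma IsTree.eq_of_dist_add_one {u v c c' : V} (hc : G.Adj u c) (hc' : G.Adj u c')
    (h : G.dist v c + 1 = G.dist v u) (h' : G.dist v c' + 1 = G.dist v u) : c = c' := by
  obtain ⟨q, hq⟩ := hT.connected.exists_walk_length_eq_dist c v
  obtain ⟨q', hq'⟩ := hT.connected.exists_walk_length_eq_dist c' v
  have hlen : ∀ {d} (hd : G.Adj u d) (r : G.Walk d v), r.length = G.dist d v →
      G.dist v d + 1 = G.dist v u → (Walk.cons hd r).IsPath := by
    intro d hd r hr hdv
    refine Walk.isPath_of_length_eq_dist _ ?_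
    rw [Walk.length_cons, hr, dist_comm, hdv, dist_comm]
  have := (hT.existsUnique_path u v).unique (hlen hc q hq h) (hlen hc' q' hq' h')
  simpa using congrArg Walk.snd this

lemma IsTree.eq_towards {u v c : V} (hc : G.Adj u c) (h : G.dist v c + 1 = G.dist v u) :
    c = G.towards u v := by
  have huv : u ≠ v := by rintro rfl; simp at h
  exact hT.eq_of_dist_add_one hc (hT.connected.adj_towards huv) h
    (hT.connected.dist_towards_add_one huv)

lemma IsTree.mem_branch_or_mem_branch {k a : V} (h : G.Adj k a) (y : V) :
    y ∈ G.branch k a ∨ y ∈ G.branch a k :=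
  hT.dist_eq_dist_add_one_of_adj y h

lemma IsTree.disjoint_branch {k a b : V} (ha : G.Adj k a) (hb : G.Adj k b) (hab : a ≠ b) :
    Disjoint (G.branch k a) (G.branch k b) :=
  Set.disjoint_left.mpr fun _ hya hyb => hab (hT.eq_of_dist_add_one ha hb hya.symm hyb.symm)

lemma IsTree.dist_eq_add_of_mem_branch {k a x z : V} (hka : G.Adj k a) (hx : x ∈ G.branch a k)
    (hz : z ∈ G.branch k a) : G.dist x z = G.dist x k + G.dist k z := by
  induction hn : G.dist x k generalizing k a with
  | zero => simp [(hT.connected.dist_eq_zero_iff).mp hn]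
  | succ n ih =>
    have hxk : x ≠ k := by rintro rfl; simp at hn
    set y := G.towards k x
    have hky : G.Adj k y := hT.connected.adj_towards hxk.symm
    have hxy : G.dist x y + 1 = G.dist x k := hT.connected.dist_towards_add_one hxk.symm
    -- otherwise `y` would be the step from `k` towards `z`, which is `a`
    have hzy : z ∈ G.branch y k := by
      refine (hT.mem_branch_or_mem_branch hky z).resolve_left fun hz' => ?_
      have hya : y = a := hT.eq_of_dist_add_one hky hka hz'.symm hz.symm
      rw [mem_branch, ← hya] at hx
      omega
    have := ih hky.symm (mem_branch.mpr hxy.symm) hzy (by omega)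
    rw [this, dist_comm (u := y), mem_branch.mp hzy, dist_comm (u := z)]
    omega

lemma IsTree.branch_subset_branch {c a m b : V} (hca : G.Adj c a) (hm : m ∈ G.branch c a)
    (hmb : G.Adj m b) (hc : c ∈ G.branch b m) : G.branch m b ⊆ G.branch c a := by
  intro y hy
  have hcy := hT.dist_eq_add_of_mem_branch hmb hc hy
  refine (hT.mem_branch_or_mem_branch hca y).resolve_right fun hy' => ?_
  have hym := hT.dist_eq_add_of_mem_branch hca hy' hm
  have hmc : G.dist m c ≠ 0 := by rw [mem_branch.mp hm]; omega
  rw [dist_comm (u := m), dist_comm (u := y) (v := c), dist_comm (u := y) (v := m)] at *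
  omega

lemma IsTree.mem_support_of_mem_branch {k a x z : V} (hka : G.Adj k a) (p : G.Walk x z)
    (hx : x ∉ G.branch k a) (hz : z ∈ G.branch k a) : k ∈ p.support := by
  induction p with
  | nil => exact absurd hz hx
  | @cons x y z hxy q ih =>
    by_cases hy : y ∈ G.branch k a
    · have hx' := (hT.mem_branch_or_mem_branch hka x).resolve_left hx
      have h := hT.dist_eq_add_of_mem_branch hka hx' hy
      rw [dist_eq_one_iff_adj.mpr hxy] at h
      have hyk : G.dist k y ≠ 0 := by
        rw [dist_comm, mem_branch.mp hy]; omega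
      have : x = k := hT.connected.dist_eq_zero_iff.mp (by omega)
      simp [this]
    · exact List.mem_cons_of_mem _ (ih hy hz)

lemma IsTree.exists_outermost_mem_branch [Finite V] {c a m : V} {P : V → Prop} (hca : G.Adj c a)
    (hm : m ∈ G.branch c a) (hPm : P m) :
    ∃ m ∈ G.branch c a, P m ∧
      ∀ b, G.Adj m b → c ∈ G.branch b m → ∀ y ∈ G.branch m b, ¬ P y := by
  set S := {y | y ∈ G.branch c a ∧ P y}
  obtain ⟨m, ⟨hm, hPm⟩, hmax⟩ := S.exists_max_image (G.dist c) S.toFinite ⟨m, hm, hPm⟩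
  refine ⟨m, hm, hPm, fun b hmb hc y hy hPy => ?_⟩
  have hcy := hT.dist_eq_add_of_mem_branch hmb hc hy
  have hmy : G.dist m y ≠ 0 := by rw [dist_comm, mem_branch.mp hy]; omega
  have := hmax y ⟨hT.branch_subset_branch hca hm hmb hc hy, hPy⟩
  omega

lemma IsTree.exists_degree_eq_one_mem_branch [Fintype V] [DecidableRel G.Adj] {c a : V}
    (hca : G.Adj c a) : ∃ x ∈ G.branch c a, G.degree x = 1 := by
  obtain ⟨x, hx, -, hout⟩ :=
    hT.exists_outermost_mem_branch (P := fun _ => True) hca (mem_branch_of_adj hca) trivial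
  have hxc := ne_of_mem_branch hx
  refine ⟨x, hx, degree_eq_one_iff_existsUnique_adj.mpr
    ⟨G.towards x c, hT.connected.adj_towards hxc, fun b hxb => ?_⟩⟩
  obtain hcb | hcb := hT.mem_branch_or_mem_branch hxb c
  · exact hT.eq_towards hxb (mem_branch.mp hcb).symm
  · exact (hout b hxb hcb b (mem_branch_of_adj hxb) trivial).elim

lemma IsTree.disjoint_branch_of_not_mem {k₁ a₁ k₂ a₂ : V} (h₁ : G.Adj k₁ a₁)
    (h₂ : G.Adj k₂ a₂) (hk : k₁ ≠ k₂) (hk₂ : k₂ ∉ G.branch k₁ a₁) (hk₁ : k₁ ∉ G.branch k₂ a₂) :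
    Disjoint (G.branch k₁ a₁) (G.branch k₂ a₂) := by
  refine Set.disjoint_left.mpr fun y hy₁ hy₂ => ?_
  have e₁ := hT.dist_eq_add_of_mem_branch h₁
    ((hT.mem_branch_or_mem_branch h₁ k₂).resolve_left hk₂) hy₁
  have e₂ := hT.dist_eq_add_of_mem_branch h₂
    ((hT.mem_branch_or_mem_branch h₂ k₁).resolve_left hk₁) hy₂
  have := hT.connected.pos_dist_of_ne hk
  rw [dist_comm (u := k₂) (v := k₁)] at e₁
  omega

end Tree

section Resolving

variable (hT : G.IsTree)
include hT

lemma IsTree.dist_towards_add_one_of_dist_eq {u v w : V} (huv : u ≠ v)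
    (h : G.dist u w = G.dist v w) : G.dist (G.towards u v) w + 1 = G.dist u w := by
  have hadj := hT.connected.adj_towards huv
  rw [dist_comm, dist_comm (u := u)]
  refine (mem_branch.mp ((hT.mem_branch_or_mem_branch hadj w).resolve_right fun hw => ?_)).symm
  have hv : v ∈ G.branch u (G.towards u v) := (hT.connected.dist_towards_add_one huv).symm
  have := hT.dist_eq_add_of_mem_branch hadj hw hv
  have := hT.connected.pos_dist_of_ne huv
  rw [dist_comm (u := u), dist_comm (u := v)] at h
  omega

lemma IsTree.isResolvingSet_of_forall_branch {W : Set V} (hW : W.Nonempty)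
    (h : ∀ c a b, G.Adj c a → G.Adj c b → a ≠ b →
      ∃ w ∈ W, w ∈ G.branch c a ∪ G.branch c b) :
    IsResolvingSet G W := by
  obtain ⟨w₀, hw₀⟩ := hW
  intro u v huv
  by_contra! hres
  induction hn : G.dist u w₀ using Nat.strong_induction_on generalizing u v with
  | _ n ih =>
    -- stepping from `u` and `v` towards each other keeps them equidistant from `W`
    have hu w (hw : w ∈ W) := hT.dist_towards_add_one_of_dist_eq huv (hres w hw)
    have hv w (hw : w ∈ W) := hT.dist_towards_add_one_of_dist_eq huv.symm (hres w hw).symm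
    by_cases heq : G.towards u v = G.towards v u
    · obtain ⟨w, hw, hwu | hwv⟩ := h _ u v (hT.connected.adj_towards huv).symm
        (heq ▸ (hT.connected.adj_towards huv.symm).symm) huv
      · have := hu w hw
        rw [mem_branch, dist_comm (u := w), dist_comm (u := w)] at hwu
        omega
      · have := hv w hw
        rw [mem_branch, dist_comm (u := w), dist_comm (u := w), heq] at hwv
        omega
    · refine ih _ ?_ _ _ heq (fun w hw => ?_) rfl
      · have := hu w₀ hw₀
        omega
      · have := hu w hw
        have := hv w hw
        have := hres w hw
        omega

lemma _root_.IsResolvingSet.exists_mem_branch {R : Set V} (hR : IsResolvingSet G R)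
    {c a b : V} (ha : G.Adj c a) (hb : G.Adj c b) (hab : a ≠ b) :
    ∃ w ∈ R, w ∈ G.branch c a ∪ G.branch c b := by
  obtain ⟨w, hw, hne⟩ := hR a b hab
  refine ⟨w, hw, ?_⟩
  by_contra hout
  rw [Set.mem_union, not_or] at hout
  have hwa := mem_branch.mp ((hT.mem_branch_or_mem_branch ha w).resolve_left hout.1)
  have hwb := mem_branch.mp ((hT.mem_branch_or_mem_branch hb w).resolve_left hout.2)
  rw [dist_comm (u := a), dist_comm (u := b)] at hne
  omega

end Resolving

section NearestMajor

variable [Fintype V] [DecidableRel G.Adj] (hM : {v : V | 3 ≤ G.degree v}.Nonempty)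

noncomputable def nearestMajor (l : V) : V :=
  Function.argminOn (G.dist l) _ hM

lemma three_le_degree_nearestMajor (l : V) : 3 ≤ G.degree (nearestMajor hM l) :=
  Function.argminOn_mem _ _ hM

lemma dist_nearestMajor_le (l : V) {m : V} (hm : 3 ≤ G.degree m) :
    G.dist l (nearestMajor hM l) ≤ G.dist l m :=
  Function.argminOn_le (G.dist l) {v | 3 ≤ G.degree v} hm

lemma ne_nearestMajor {l : V} (hl : G.degree l < 3) : l ≠ nearestMajor hM l := by
  intro h
  have := three_le_degree_nearestMajor hM l
  rw [← h] at this
  omega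

/-- For a leaf `l`, the path from `l` up to, but excluding, its exterior major vertex. -/
noncomputable def leg (l : V) : Set V :=
  G.branch (nearestMajor hM l) (G.towards (nearestMajor hM l) l)

def HasTwinLeaves (s : Set V) : Prop :=
  ∃ x₁ ∈ s, ∃ x₂ ∈ s, x₁ ≠ x₂ ∧ G.degree x₁ = 1 ∧ G.degree x₂ = 1 ∧
    nearestMajor hM x₁ = nearestMajor hM x₂

lemma HasTwinLeaves.mono {s t : Set V} (h : HasTwinLeaves hM s) (hst : s ⊆ t) :
    HasTwinLeaves hM t :=
  let ⟨x₁, h₁, x₂, h₂, hx⟩ := h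
  ⟨x₁, hst h₁, x₂, hst h₂, hx⟩

section Connected

variable (hG : G.Connected)
include hG

lemma Connected.mem_leg {l : V} (hl : G.degree l < 3) : l ∈ leg hM l :=
  hG.mem_branch_towards (ne_nearestMajor hM hl)

lemma Connected.degree_lt_three_of_dist_add_dist {l u : V} (hu : u ≠ nearestMajor hM l)
    (h : G.dist (nearestMajor hM l) u + G.dist u l = G.dist (nearestMajor hM l) l) :
    G.degree u < 3 := by
  by_contra! hu3
  have := dist_nearestMajor_le hM l hu3
  have := hG.pos_dist_of_ne hu.symm
  rw [dist_comm (u := u) (v := l), dist_comm (u := nearestMajor hM l) (v := l)] at h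
  omega

lemma Connected.degree_eq_two_of_dist_add_dist {l u : V} (hul : u ≠ l)
    (hu : u ≠ nearestMajor hM l)
    (h : G.dist (nearestMajor hM l) u + G.dist u l = G.dist (nearestMajor hM l) l) :
    G.degree u = 2 := by
  have := hG.degree_lt_three_of_dist_add_dist hM hu h
  have := hG.two_le_degree_of_dist_add_dist hu hul h
  omega

end Connected

section Tree

variable (hT : G.IsTree)
include hT

lemma IsTree.nearestMajor_eq_of_mem_branch {m a x : V} (hm : 3 ≤ G.degree m) (hma : G.Adj m a)
    (hx : x ∈ G.branch m a) (hfree : ∀ y ∈ G.branch m a, G.degree y < 3) :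
    nearestMajor hM x = m := by
  by_contra hne
  set k := nearestMajor hM x
  have hk : k ∈ G.branch a m := (hT.mem_branch_or_mem_branch hma k).resolve_left fun hk =>
    (hfree k hk).not_ge (three_le_degree_nearestMajor hM x)
  have hkx := hT.dist_eq_add_of_mem_branch hma hk hx
  have hkm : 0 < G.dist k m := hT.connected.pos_dist_of_ne hne
  have hmin : G.dist x k ≤ G.dist x m := dist_nearestMajor_le hM x hm
  rw [dist_comm (u := k), dist_comm (u := m) (v := x)] at hkx
  omega

lemma IsTree.degree_eq_two_of_mem_leg {l y : V} (hl : G.degree l = 1) (hy : y ∈ leg hM l)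
    (hyl : y ≠ l) : G.degree y = 2 := by
  set k := nearestMajor hM l
  have hG := hT.connected
  have hlk : l ≠ k := ne_nearestMajor hM (by omega)
  have hyk : y ≠ k := ne_of_mem_branch hy
  have hdir : G.towards k l = G.towards k y := hT.eq_towards (hG.adj_towards hlk.symm) hy.symm
  -- where the geodesics from `k` to `l` and to `y` part
  obtain ⟨z, hzl, hzy, hfork⟩ := hG.exists_fork k l y
  by_cases hz : z = y
  · subst hz
    exact hG.degree_eq_two_of_dist_add_dist hM hyl hyk hzl
  by_cases hz' : z = l
  · subst hz'
    have := hG.two_le_degree_of_dist_add_dist hlk hyl.symm hzy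
    omega
  have hzk : z ≠ k := by
    rintro rfl
    exact (hfork.resolve_left hz').resolve_left hz hdir
  have := hG.degree_lt_three_of_dist_add_dist hM hzk hzl
  have := three_le_degree_of_adj (hG.adj_towards hzk) (hG.adj_towards hz') (hG.adj_towards hz)
    (hG.towards_ne_towards hzk hz' hzl) (hG.towards_ne_towards hzk hz hzy)
    ((hfork.resolve_left hz').resolve_left hz)
  omega

lemma IsTree.degree_lt_three_of_mem_leg {l y : V} (hl : G.degree l = 1) (hy : y ∈ leg hM l) :
    G.degree y < 3 := by
  by_cases hyl : y = l
  · subst hyl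
    omega
  · have := hT.degree_eq_two_of_mem_leg hM hl hy hyl
    omega

lemma IsTree.isExtMajor_nearestMajor {l : V} (hl : G.degree l = 1) :
    IsExtMajor G (nearestMajor hM l) := by
  obtain ⟨p, hp, hlen⟩ := hT.connected.exists_path_of_dist (nearestMajor hM l) l
  exact ⟨three_le_degree_nearestMajor hM l, l, p, hl, hp, fun u hu huk hul =>
    hT.connected.degree_eq_two_of_dist_add_dist hM hul huk
      (hT.connected.dist_add_dist_of_mem_support hlen hu)⟩

lemma IsTree.exists_nearestMajor_eq {k : V} (hk : IsExtMajor G k) :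
    ∃ l, G.degree l = 1 ∧ nearestMajor hM l = k := by
  obtain ⟨hk3, l, p, hl, -, hint⟩ := hk
  have hl : G.degree l = 1 := hl
  refine ⟨l, hl, by_contra fun hne => ?_⟩
  set m := nearestMajor hM l
  have hml : m ≠ l := (ne_nearestMajor hM (by omega : G.degree l < 3)).symm
  -- the walk `p` enters the leg of `l` from outside, so it passes through `m`
  have hk : k ∉ leg hM l := fun hk => (hT.degree_lt_three_of_mem_leg hM hl hk).not_ge hk3
  have hm := hT.mem_support_of_mem_branch (hT.connected.adj_towards hml) p hk
    (hT.connected.mem_leg hM (by omega))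
  have h2 := hint m hm hne hml
  have h3 : 3 ≤ G.degree m := three_le_degree_nearestMajor hM l
  omega

lemma IsTree.disjoint_leg {l₁ l₂ : V} (hl₁ : G.degree l₁ = 1) (hl₂ : G.degree l₂ = 1)
    (hne : l₁ ≠ l₂) : Disjoint (leg hM l₁) (leg hM l₂) := by
  have h₁ := hT.connected.adj_towards (ne_nearestMajor hM (by omega : G.degree l₁ < 3)).symm
  have h₂ := hT.connected.adj_towards (ne_nearestMajor hM (by omega : G.degree l₂ < 3)).symm
  by_cases hk : nearestMajor hM l₁ = nearestMajor hM l₂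
  · unfold leg
    rw [hk] at h₁ ⊢
    refine hT.disjoint_branch h₁ h₂ fun ha => ?_
    have : l₂ ∈ leg hM l₁ := by
      unfold leg
      rw [hk, ha]
      exact hT.connected.mem_leg hM (by omega)
    have := hT.degree_eq_two_of_mem_leg hM hl₁ this hne.symm
    omega
  · exact hT.disjoint_branch_of_not_mem h₁ h₂ hk
      (fun h => (hT.degree_lt_three_of_mem_leg hM hl₁ h).not_ge
        (three_le_degree_nearestMajor hM l₂))
      (fun h => (hT.degree_lt_three_of_mem_leg hM hl₂ h).not_ge
        (three_le_degree_nearestMajor hM l₁))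

lemma IsTree.hasTwinLeaves_of_forall_degree_lt_three {m a₁ a₂ : V} (hm : 3 ≤ G.degree m)
    (ha₁ : G.Adj m a₁) (ha₂ : G.Adj m a₂) (hne : a₁ ≠ a₂)
    (hf₁ : ∀ y ∈ G.branch m a₁, G.degree y < 3)
    (hf₂ : ∀ y ∈ G.branch m a₂, G.degree y < 3) :
    HasTwinLeaves hM (G.branch m a₁ ∪ G.branch m a₂) := by
  obtain ⟨x₁, hx₁, hl₁⟩ := hT.exists_degree_eq_one_mem_branch ha₁
  obtain ⟨x₂, hx₂, hl₂⟩ := hT.exists_degree_eq_one_mem_branch ha₂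
  have hne' : x₁ ≠ x₂ := fun h =>
    Set.disjoint_left.mp (hT.disjoint_branch ha₁ ha₂ hne) hx₁ (h ▸ hx₂)
  refine ⟨x₁, .inl hx₁, x₂, .inr hx₂, hne', hl₁, hl₂, ?_⟩
  rw [hT.nearestMajor_eq_of_mem_branch hM hm ha₁ hx₁ hf₁,
    hT.nearestMajor_eq_of_mem_branch hM hm ha₂ hx₂ hf₂]

lemma IsTree.hasTwinLeaves_branch {c a : V} (hca : G.Adj c a)
    (h : ∃ y ∈ G.branch c a, 3 ≤ G.degree y) : HasTwinLeaves hM (G.branch c a) := by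
  obtain ⟨y, hy, hy3⟩ := h
  obtain ⟨m, hm, hm3, hout⟩ :=
    hT.exists_outermost_mem_branch (P := fun y => 3 ≤ G.degree y) hca hy hy3
  obtain ⟨a₁, a₂, h₁, h₂, hne, h₁c, h₂c⟩ :=
    exists_adj_adj_ne_of_three_le_degree hm3 (G.towards m c)
  have hc {b : V} (hb : G.Adj m b) (hbc : b ≠ G.towards m c) : c ∈ G.branch b m :=
    (hT.mem_branch_or_mem_branch hb c).resolve_left fun h => hbc (hT.eq_towards hb h.symm)
  refine (hT.hasTwinLeaves_of_forall_degree_lt_three hM hm3 h₁ h₂ hne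
    (fun y hy => not_le.mp (hout a₁ h₁ (hc h₁ h₁c) y hy))
    (fun y hy => not_le.mp (hout a₂ h₂ (hc h₂ h₂c) y hy))).mono hM ?_
  exact Set.union_subset (hT.branch_subset_branch hca hm h₁ (hc h₁ h₁c))
    (hT.branch_subset_branch hca hm h₂ (hc h₂ h₂c))

lemma IsTree.hasTwinLeaves_branch_union {c a b : V} (ha : G.Adj c a) (hb : G.Adj c b)
    (hab : a ≠ b) : HasTwinLeaves hM (G.branch c a ∪ G.branch c b) := by
  by_cases hA : ∃ y ∈ G.branch c a, 3 ≤ G.degree y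
  · exact (hT.hasTwinLeaves_branch hM ha hA).mono hM Set.subset_union_left
  by_cases hB : ∃ y ∈ G.branch c b, 3 ≤ G.degree y
  · exact (hT.hasTwinLeaves_branch hM hb hB).mono hM Set.subset_union_right
  push Not at hA hB
  refine hT.hasTwinLeaves_of_forall_degree_lt_three hM ?_ ha hb hab hA hB
  -- `c` is major, as otherwise every vertex but `c` lies in one of the two branches
  by_contra! hc
  obtain ⟨v, hv⟩ := id hM
  have hv : 3 ≤ G.degree v := hv
  have hvc : v ≠ c := by
    rintro rfl
    omega
  have hv' := hT.connected.mem_branch_towards hvc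
  by_cases hta : G.towards c v = a
  · exact (hA v (hta ▸ hv')).not_ge hv
  by_cases htb : G.towards c v = b
  · exact (hB v (htb ▸ hv')).not_ge hv
  exact hc.not_ge (three_le_degree_of_adj ha hb (hT.connected.adj_towards hvc.symm) hab
    (Ne.symm hta) (Ne.symm htb))

include hM in
lemma IsTree.exists_isResolvingSet_ncard_eq : ∃ R, IsResolvingSet G R ∧
    R.ncard = {v | IsLeafVx G v}.ncard - {v | IsExtMajor G v}.ncard := by
  choose! F hFl hFk using fun k (hk : k ∈ {v | IsExtMajor G v}) => hT.exists_nearestMajor_eq hM hk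
  have hinj : Set.InjOn F {v | IsExtMajor G v} := fun k₁ h₁ k₂ h₂ h => by
    rw [← hFk k₁ h₁, h, hFk k₂ h₂]
  have hsub : F '' {v | IsExtMajor G v} ⊆ {v | IsLeafVx G v} := by
    rintro _ ⟨k, hk, rfl⟩
    exact hFl k hk
  set R := {v | IsLeafVx G v} \ F '' {v | IsExtMajor G v}
  -- of two leaves with the same nearest major vertex, `F` picks at most one
  have htwin (s : Set V) (hs : HasTwinLeaves hM s) : ∃ w ∈ R, w ∈ s := by
    obtain ⟨x₁, hx₁, x₂, hx₂, hne, hl₁, hl₂, heq⟩ := hs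
    by_contra! hR
    obtain ⟨k₁, hk₁, rfl⟩ : x₁ ∈ F '' {v | IsExtMajor G v} := by
      by_contra h
      exact hR x₁ ⟨hl₁, h⟩ hx₁
    obtain ⟨k₂, hk₂, rfl⟩ : x₂ ∈ F '' {v | IsExtMajor G v} := by
      by_contra h
      exact hR x₂ ⟨hl₂, h⟩ hx₂
    rw [hFk k₁ hk₁, hFk k₂ hk₂] at heq
    exact hne (heq ▸ rfl)
  refine ⟨R, hT.isResolvingSet_of_forall_branch ?_ fun c a b ha hb hab =>
    htwin _ (hT.hasTwinLeaves_branch_union hM ha hb hab),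
    by rw [Set.ncard_sdiff hsub, hinj.ncard_image]⟩
  obtain ⟨v, hv⟩ := id hM
  obtain ⟨a, b, ha, hb, hab, -, -⟩ := exists_adj_adj_ne_of_three_le_degree hv v
  obtain ⟨w, hw, -⟩ := htwin _ (hT.hasTwinLeaves_branch_union hM ha hb hab)
  exact ⟨w, hw⟩

lemma IsTree.injOn_nearestMajor {R : Set V} (hR : IsResolvingSet G R) :
    Set.InjOn (nearestMajor hM) {l | G.degree l = 1 ∧ Disjoint (leg hM l) R} := by
  rintro l₁ ⟨hl₁, hd₁⟩ l₂ ⟨hl₂, hd₂⟩ heq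
  by_contra hne
  have ha₁ := hT.connected.adj_towards (ne_nearestMajor hM (by omega : G.degree l₁ < 3)).symm
  have ha₂ := hT.connected.adj_towards (ne_nearestMajor hM (by omega : G.degree l₂ < 3)).symm
  rw [← heq] at ha₂
  have hne' : G.towards (nearestMajor hM l₁) l₁ ≠ G.towards (nearestMajor hM l₁) l₂ := by
    intro h
    have : l₂ ∈ leg hM l₁ := by
      unfold leg
      rw [h, heq]
      exact hT.connected.mem_leg hM (by omega)
    have := hT.degree_eq_two_of_mem_leg hM hl₁ this (Ne.symm hne)
    omega
  obtain ⟨w, hw, hw₁ | hw₂⟩ := hR.exists_mem_branch hT ha₁ ha₂ hne'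
  · exact Set.disjoint_left.mp hd₁ hw₁ hw
  · refine Set.disjoint_left.mp hd₂ ?_ hw
    unfold leg
    rwa [← heq]

include hM in
lemma IsTree.ncard_le_of_isResolvingSet {R : Set V} (hR : IsResolvingSet G R) :
    {v | IsLeafVx G v}.ncard ≤ {v | IsExtMajor G v}.ncard + R.ncard := by
  set B := {l | G.degree l = 1 ∧ Disjoint (leg hM l) R}
  have hB : B.ncard ≤ {v | IsExtMajor G v}.ncard :=
    Set.ncard_le_ncard_of_injOn (nearestMajor hM)
      (fun l hl => hT.isExtMajor_nearestMajor hM hl.1) (hT.injOn_nearestMajor hM hR)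
  have hLB : ({v | IsLeafVx G v} \ B).ncard ≤ R.ncard := by
    have h (l : V) (hl : l ∈ {v | IsLeafVx G v} \ B) : ∃ r ∈ R, r ∈ leg hM l := by
      obtain ⟨r, h₁, h₂⟩ := Set.not_disjoint_iff.mp fun h => hl.2 ⟨hl.1, h⟩
      exact ⟨r, h₂, h₁⟩
    choose! g hgR hgl using h
    exact Set.ncard_le_ncard_of_injOn g hgR fun l₁ h₁ l₂ h₂ h => by_contra fun hne =>
      Set.disjoint_left.mp (hT.disjoint_leg hM h₁.1 h₂.1 hne) (hgl l₁ h₁)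
        (h ▸ hgl l₂ h₂)
  have := Set.ncard_sdiff_add_ncard_of_subset (s := B) (t := {v | IsLeafVx G v}) fun l hl => hl.1
  omega

end Tree

end NearestMajor

end SimpleGraph

lemma metricDim_eq_ncard {V : Type*} [Fintype V] {G : SimpleGraph V} {R : Set V}
    (hR : IsResolvingSet G R) (h : ∀ R', IsResolvingSet G R' → R.ncard ≤ R'.ncard) :
    metricDim G = R.ncard :=
  le_antisymm (Nat.sInf_le ⟨R, hR, rfl⟩)
    (le_csInf ⟨_, R, hR, rfl⟩ (by rintro _ ⟨R', hR', rfl⟩; exact h R' hR'))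

/-- If `T` is a tree that is not a path graph, then its metric dimension equals
`|L(T)| - |K(T)|`, the number of leaves minus the number of exterior major nodes. -/
theorem metricDim_of_tree_not_path {V : Type*} [Fintype V] (G : SimpleGraph V)
    [DecidableRel G.Adj] (hT : G.IsTree) (hnp : ¬ IsPathGraph G) :
    metricDim G = Nat.card {v : V // IsLeafVx G v} - Nat.card {v : V // IsExtMajor G v} := by
  have hM : {v : V | 3 ≤ G.degree v}.Nonempty := by
    simp only [IsPathGraph, not_and, not_forall, not_le] at hnp
    exact hnp hT
  obtain ⟨R, hR, hcard⟩ := hT.exists_isResolvingSet_ncard_eq hM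
  have hL : Nat.card {v // IsLeafVx G v} = {v | IsLeafVx G v}.ncard := Nat.card_coe_set_eq _
  have hK : Nat.card {v // IsExtMajor G v} = {v | IsExtMajor G v}.ncard := Nat.card_coe_set_eq _
  rw [hL, hK, ← hcard]
  refine metricDim_eq_ncard hR fun R' hR' => ?_
  have := hT.ncard_le_of_isResolvingSet hM hR'
  omega
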